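/- For each x ∈ S^6, the linear map f(x) on Im O ≅ ℝ^7 induced by conjugation by e0 + √3·x fixes x, i.e. f(x)x = x. -/

import Mathlib

noncomputable section

/-- The octonions, realized by Cayley–Dickson doubling of the quaternions. -/
abbrev Octo := Quaternion ℝ × Quaternion ℝ

namespace Octo

/-- Octonion multiplication (Cayley–Dickson formula). -/
def mul' (x y : Octo) : Octo :=
  (x.1 * y.1 - star y.2 * x.2, y.2 * x.1 + x.2 * star y.1)

/-- The unit octonion `e0`. -/
def one' : Octo := (1, 0)

/-- Octonionic conjugation. -/
def conj' (x : Octo) : Octo := (star x.1, -x.2)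

/-- The real part of an octonion. -/
def re' (x : Octo) : ℝ := x.1.re

/-- The Euclidean inner product on the octonions `≅ ℝ^8`. -/
def dot (x y : Octo) : ℝ :=
  x.1.re * y.1.re + x.1.imI * y.1.imI + x.1.imJ * y.1.imJ + x.1.imK * y.1.imK +
  x.2.re * y.2.re + x.2.imI * y.2.imI + x.2.imJ * y.2.imJ + x.2.imK * y.2.imK

/-- The squared Euclidean norm of an octonion. -/
def norm2 (x : Octo) : ℝ := dot x x

/-- The imaginary part of an octonion. -/
def im' (x : Octo) : Octo := x - (re' x) • one'

end Octo

/-- Conjugation by `e0 + √3·x` : `u ↦ (1/4)·((e0+√3x)·u)·(e0−√3x)`. -/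
def conjMap (x : Octo) (u : Octo) : Octo :=
  (4 : ℝ)⁻¹ • Octo.mul' (Octo.mul' (Octo.one' + Real.sqrt 3 • x) u)
    (Octo.one' - Real.sqrt 3 • x)

/-! For a purely imaginary octonion `x` one has `x² = -|x|²`, so `e0`, `x` span a copy of `ℂ`
in which the conjugation is an ordinary (commutative) computation:
`(1 + √3 x) x (1 - √3 x) = (1 + 3|x|²) x`, which is `4x` on the unit sphere. -/

namespace Octo

open Quaternion

theorem norm2_eq_normSq_add_normSq (x : Octo) : norm2 x = normSq x.1 + normSq x.2 := by
  simp only [norm2, dot, normSq_def']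
  ring

theorem add_mul' (x y z : Octo) : mul' (x + y) z = mul' x z + mul' y z := by
  ext : 1 <;> simp only [mul', Prod.fst_add, Prod.snd_add] <;> noncomm_ring

theorem mul'_sub (x y z : Octo) : mul' x (y - z) = mul' x y - mul' x z := by
  ext : 1 <;> simp only [mul', Prod.fst_sub, Prod.snd_sub, star_sub] <;> noncomm_ring

theorem mul'_smul (r : ℝ) (x y : Octo) : mul' x (r • y) = r • mul' x y := by
  ext : 1 <;> simp only [mul', Prod.smul_fst, Prod.smul_snd, Quaternion.star_smul, mul_smul_comm,
    smul_mul_assoc, smul_sub, smul_add]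

theorem smul_mul' (r : ℝ) (x y : Octo) : mul' (r • x) y = r • mul' x y := by
  ext : 1 <;> simp only [mul', Prod.smul_fst, Prod.smul_snd, mul_smul_comm,
    smul_mul_assoc, smul_sub, smul_add]

theorem one'_mul' (x : Octo) : mul' one' x = x := by
  ext : 1 <;> simp [mul', one']

theorem mul'_one' (x : Octo) : mul' x one' = x := by
  ext : 1 <;> simp [mul', one']

theorem mul'_self_of_re'_eq_zero {x : Octo} (hx : re' x = 0) :
    mul' x x = -norm2 x • one' := by
  have hstar : star x.1 = -x.1 := star_eq_neg.mpr hx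
  ext : 1
  · have hx1 : x.1 * x.1 = -((normSq x.1 : ℝ) : Quaternion ℝ) := by
      rw [← self_mul_star, hstar, mul_neg, neg_neg]
    simp only [mul', one', hx1, star_mul_self, norm2_eq_normSq_add_normSq, Prod.smul_fst]
    rw [← coe_one, smul_coe, mul_one, coe_neg, coe_add]
    abel
  · simp [mul', one', hstar]

end Octo

open Octo in
theorem conjMap_self_of_re'_eq_zero {x : Octo} (hx : re' x = 0) :
    conjMap x x = ((1 + 3 * norm2 x) / 4) • x := by
  have hsq : Real.sqrt 3 * Real.sqrt 3 = 3 := Real.mul_self_sqrt (by norm_num)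
  simp only [conjMap, add_mul', mul'_sub, smul_mul', mul'_smul, one'_mul',
    mul'_one', mul'_self_of_re'_eq_zero hx]
  linear_combination (norm := module) (norm2 x / 4) • hsq • x

/-- For `x ∈ S⁶`, the map `f(x)` induced by conjugation by `e0+√3x` fixes `x`. -/
theorem stmt5 (x : Octo) (him : Octo.re' x = 0) (hx : Octo.norm2 x = 1) :
    conjMap x x = x := by
  rw [conjMap_self_of_re'_eq_zero him, hx]
  norm_num
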